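/- There exists a constant C_d < ∞, depending only on the dimension d, such that for all β ≥ 0, all integers m ≥ 2, and all u, v, w ∈ ℤ^d with ‖u−v‖_∞ = 1 and ‖v−w‖_∞ ≥ 2: ℙ_β( ∃ x, y ∈ V_v^m with ‖x−y‖_∞ ≤ 1, x ∼ V_u^m, and y ∼ V_w^m ) is at most C_d·β·⌈β⌉·log(m) / ( ‖v−w‖_∞^{2d}·m ) when d = 1, and at most C_d·β·⌈β⌉ / ( ‖v−w‖_∞^{2d}·m ) when d ≥ 2. -/

import Mathlib

open MeasureTheory ProbabilityTheory ENNReal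

noncomputable section

/-- Configuration space of long-range percolation on `ℤ^d`:
each unordered pair of vertices carries a `Bool` (open or closed). -/
abbrev PercConfig (d : ℕ) := Sym2 (Fin d → ℤ) → Bool

/-- The sup norm `‖x‖_∞` of an integer vector, as a natural number. -/
def supNorm {d : ℕ} (x : Fin d → ℤ) : ℕ := Finset.univ.sup fun i => (x i).natAbs

/-- The Euclidean norm `‖x‖₂` of an integer vector. -/
def l2norm {d : ℕ} (x : Fin d → ℤ) : ℝ := Real.sqrt (∑ i, ((x i : ℝ)) ^ 2)

/-- The half-open unit cube `u + [0,1)^d` in `ℝ^d`. -/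
def unitCube {d : ℕ} (u : Fin d → ℤ) : Set (Fin d → ℝ) :=
  Set.univ.pi fun i => Set.Ico (u i : ℝ) ((u i : ℝ) + 1)

/-- `∫_{u+C} ∫_{v+C} ‖x−y‖₂^{−2d} dx dy` with respect to Lebesgue measure,
as an extended nonnegative real (it is `∞` exactly when `‖u−v‖_∞ ≤ 1`). -/
def edgeIntegral (d : ℕ) (u v : Fin d → ℤ) : ℝ≥0∞ :=
  ∫⁻ x in unitCube u, ∫⁻ y in unitCube v,
    ENNReal.ofReal ((Real.sqrt (∑ i, (x i - y i) ^ 2)) ^ (-(2 * (d : ℝ))))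

/-- The connection probability
`p(β,{u,v}) = 1 − exp(−β ∫_{u+C} ∫_{v+C} ‖x−y‖₂^{−2d} dx dy)`,
equal to `1` when the integral diverges. -/
def pConn (d : ℕ) (β : ℝ) (u v : Fin d → ℤ) : ℝ :=
  if edgeIntegral d u v = ⊤ then 1
  else 1 - Real.exp (-β * (edgeIntegral d u v).toReal)

/-- `P` is an independent bond percolation measure on `ℤ^d` in which each edge `{u,v}`
is open with probability `f u v`, independently over edges. -/
structure IsPercolation (d : ℕ) (f : (Fin d → ℤ) → (Fin d → ℤ) → ℝ)
    (P : Measure (PercConfig d)) : Prop where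
  isProb : IsProbabilityMeasure P
  indep : iIndepFun
    (fun (e : Sym2 (Fin d → ℤ)) (ω : PercConfig d) => ω e) P
  openProb : ∀ u v : Fin d → ℤ, u ≠ v →
    P {ω | ω s(u, v) = true} = ENNReal.ofReal (f u v)

/-- `P` is the long-range percolation measure `ℙ_β` on `ℤ^d`. -/
def IsLRP (d : ℕ) (β : ℝ) (P : Measure (PercConfig d)) : Prop :=
  IsPercolation d (pConn d β) P

/-- The graph distance `D_A(x,y)` inside `A ⊆ ℤ^d`, using only open edges with both
endpoints in `A`; it is `∞` if there is no such path. -/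
def graphDist {d : ℕ} (ω : PercConfig d) (A : Set (Fin d → ℤ))
    (x y : Fin d → ℤ) : ℕ∞ :=
  sInf {n : ℕ∞ | ∃ m : ℕ, n = m ∧ ∃ γ : ℕ → Fin d → ℤ,
    γ 0 = x ∧ γ m = y ∧ (∀ i ≤ m, γ i ∈ A) ∧
    ∀ i < m, γ i ≠ γ (i + 1) ∧ ω s(γ i, γ (i + 1)) = true}

/-- The box `V_u^n = n·u + {0,…,n−1}^d`. -/
def latticeBox (d : ℕ) (u : Fin d → ℤ) (n : ℕ) : Set (Fin d → ℤ) :=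
  {x | ∀ i, (n : ℤ) * u i ≤ x i ∧ x i < (n : ℤ) * u i + (n : ℤ)}

/-- The box `{0,…,n−1}^d`. -/
def stdBox (d : ℕ) (n : ℕ) : Set (Fin d → ℤ) := latticeBox d 0 n

/-- The expected graph distance `𝔼[D_A(x,y)]`, as an extended nonnegative real. -/
def expDist {d : ℕ} (P : Measure (PercConfig d)) (A : Set (Fin d → ℤ))
    (x y : Fin d → ℤ) : ℝ≥0∞ :=
  ∫⁻ ω, (graphDist ω A x y : ℝ≥0∞) ∂P

/-- The (inner) diameter of `A`: `diam(A) = max_{x,y ∈ A} D_A(x,y)`. -/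
def diamIn {d : ℕ} (ω : PercConfig d) (A : Set (Fin d → ℤ)) : ℕ∞ :=
  ⨆ x ∈ A, ⨆ y ∈ A, graphDist ω A x y

/-- `Λ(n,β) = max_{u,v ∈ {0,…,n−1}^d} 𝔼_β[D_{V_0^n}(u,v)] + 1`, for the measure `P = ℙ_β`. -/
def Lambda (d : ℕ) (P : Measure (PercConfig d)) (n : ℕ) : ℝ≥0∞ :=
  (⨆ u ∈ stdBox d n, ⨆ v ∈ stdBox d n, expDist P (stdBox d n) u v) + 1

/-- The distance exponent `θ(β) = lim_{n→∞} log Λ(n,β)/log n = inf_{n≥2} log Λ(n,β)/log n`. -/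
def theta (d : ℕ) (P : Measure (PercConfig d)) : ℝ :=
  ⨅ n : {m : ℕ // 2 ≤ m}, Real.log (Lambda d P n.1).toReal / Real.log (n.1 : ℝ)

/-!
A union bound over the quadruples `(x, y, a, b)` with `x, y ∈ V_v^m`, `‖x - y‖∞ ≤ 1`, `a ∈ V_u^m`,
`b ∈ V_w^m`, together with the independence of the distinct edges `{x, a}` and `{y, b}`, bounds the
probability by `∑_{x,y} (∑_a p(x,a)) (∑_b p(y,b))`. Every `b ∈ V_w^m` is at sup-distance at least
`m‖v - w‖∞/2 + 1` from `y`, so `∑_b p(y,b) ≲ β m^{-d} ‖v - w‖∞^{-2d}`. On the other side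
`p(x,a) ≲ max(1,β) ‖x - a‖∞^{-2d}`, and counting `a` on the shells `‖x - a‖∞ = k` gives
`∑_a p(x,a) ≲ max(1,β) t(x)^{-d}`, where `t(x)` is one plus the distance from `x` to the face of
`V_v^m` facing `V_u^m`. Each value `t ∈ [1, m]` is taken by at most `m^{d-1}` points `x`, and
`∑_{t ≤ m} t^{-d}` is `O(log m)` for `d = 1` and `O(1)` for `d ≥ 2`. Finally `β max(1,β) ≤ β⌈β⌉`.
-/

open Finset

section Sums

lemma sum_le_sum_mul_of_card_fiber_le {ι κ : Type*} [DecidableEq κ] {s : Finset ι} {t : Finset κ}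
    {p : ι → κ} (hp : ∀ i ∈ s, p i ∈ t) {c g : κ → ℝ}
    (hc : ∀ k ∈ t, (#{i ∈ s | p i = k} : ℝ) ≤ c k) (hg : ∀ k ∈ t, 0 ≤ g k) :
    ∑ i ∈ s, g (p i) ≤ ∑ k ∈ t, c k * g k := by
  rw [← sum_fiberwise_of_maps_to hp]
  gcongr with k hk
  rw [sum_congr rfl fun i hi => by rw [(mem_filter.1 hi).2], sum_const, nsmul_eq_mul]
  exact mul_le_mul_of_nonneg_right (hc k hk) (hg k hk)

lemma sum_Icc_inv_pow_succ_le {d : ℕ} (hd : 1 ≤ d) {s : ℕ} (hs : 1 ≤ s) (M : ℕ) :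
    ∑ k ∈ Icc s M, ((k : ℝ) ^ (d + 1))⁻¹ ≤ 2 / (s : ℝ) ^ d := by
  obtain ⟨e, rfl⟩ : ∃ e, d = e + 1 := ⟨d - 1, by omega⟩
  have hs' : (0 : ℝ) < s := by exact_mod_cast hs
  have hIcc : Icc s M = Ioo (s - 1) (M + 1) := by ext; simp only [mem_Icc, mem_Ioo]; omega
  calc ∑ k ∈ Icc s M, ((k : ℝ) ^ (e + 1 + 1))⁻¹
      ≤ ∑ k ∈ Icc s M, ((s : ℝ) ^ e)⁻¹ * ((k : ℝ) ^ 2)⁻¹ := by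
        gcongr with k hk
        have hsk : (s : ℝ) ≤ k := by exact_mod_cast (mem_Icc.1 hk).1
        have hk0 : (0 : ℝ) < k := hs'.trans_le hsk
        rw [← mul_inv, show e + 1 + 1 = e + 2 from rfl, pow_add]
        gcongr
    _ ≤ ((s : ℝ) ^ e)⁻¹ * (2 / ((s - 1 : ℕ) + 1)) := by
        rw [← mul_sum, hIcc]
        gcongr
        exact sum_Ioo_inv_sq_le _ _
    _ = 2 / (s : ℝ) ^ (e + 1) := by
        rw [Nat.cast_sub hs, Nat.cast_one, sub_add_cancel, pow_succ]
        field_simp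

lemma sum_Icc_inv_pow_le {d m : ℕ} (hd : 1 ≤ d) (hm : 2 ≤ m) :
    ∑ k ∈ Icc 1 m, ((k : ℝ) ^ d)⁻¹ ≤ 3 * if d = 1 then Real.log m else 1 := by
  split_ifs with hd1
  · subst hd1
    have hharm := harmonic_le_one_add_log m
    simp only [harmonic_eq_sum_Icc, Rat.cast_sum, Rat.cast_inv, Rat.cast_natCast] at hharm
    have hlog : Real.log 2 ≤ Real.log m := Real.log_le_log (by norm_num) (by exact_mod_cast hm)
    have := Real.log_two_gt_d9
    simp only [pow_one]
    linarith
  · calc ∑ k ∈ Icc 1 m, ((k : ℝ) ^ d)⁻¹ ≤ ∑ k ∈ Ioo 0 (m + 1), ((k : ℝ) ^ 2)⁻¹ := by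
          rw [show Icc 1 m = Ioo 0 (m + 1) by ext; simp only [mem_Icc, mem_Ioo]; omega]
          gcongr with k hk
          · have : (0 : ℝ) < k := by exact_mod_cast (mem_Ioo.1 hk).1
            positivity
          · exact_mod_cast (mem_Ioo.1 hk).1
          · omega
      _ ≤ 2 / ((0 : ℕ) + 1) := sum_Ioo_inv_sq_le _ _
      _ ≤ 3 * 1 := by norm_num

end Sums

section Boxes

variable {d : ℕ}

lemma natAbs_le_supNorm (x : Fin d → ℤ) (i : Fin d) : (x i).natAbs ≤ supNorm x :=
  le_sup (f := fun i => (x i).natAbs) (mem_univ i)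

lemma supNorm_le_iff {x : Fin d → ℤ} {n : ℕ} : supNorm x ≤ n ↔ ∀ i, (x i).natAbs ≤ n := by
  simp [supNorm]

lemma supNorm_sub_pos_iff {x y : Fin d → ℤ} : 0 < supNorm (x - y) ↔ x ≠ y := by
  simp [supNorm, Finset.lt_sup_iff, Function.ne_iff, sub_eq_zero]

lemma supNorm_sub_comm (x y : Fin d → ℤ) : supNorm (x - y) = supNorm (y - x) := by
  simp only [supNorm, Pi.sub_apply]
  congr 1
  funext i
  omega

lemma exists_natAbs_eq_supNorm {x : Fin d → ℤ} (hx : 0 < supNorm x) :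
    ∃ i, (x i).natAbs = supNorm x := by
  rcases (univ : Finset (Fin d)).eq_empty_or_nonempty with h | h
  · simp [supNorm, h] at hx
  · obtain ⟨i, -, hi⟩ := exists_mem_eq_sup univ h fun i => (x i).natAbs
    exact ⟨i, hi.symm⟩

def boxFinset (d : ℕ) (v : Fin d → ℤ) (m : ℕ) : Finset (Fin d → ℤ) :=
  Fintype.piFinset fun i => Ico ((m : ℤ) * v i) (m * v i + m)

lemma mem_boxFinset {v x : Fin d → ℤ} {m : ℕ} : x ∈ boxFinset d v m ↔ x ∈ latticeBox d v m := by
  simp [boxFinset, latticeBox]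

lemma card_boxFinset (v : Fin d → ℤ) (m : ℕ) : #(boxFinset d v m) = m ^ d := by
  simp [boxFinset, Fintype.card_piFinset]

lemma disjoint_boxFinset {v w : Fin d → ℤ} (hvw : v ≠ w) (m : ℕ) :
    Disjoint (boxFinset d v m) (boxFinset d w m) := by
  obtain ⟨i, hi⟩ := Function.ne_iff.1 hvw
  rw [disjoint_left]
  intro x hv hw
  simp only [boxFinset, Fintype.mem_piFinset, mem_Ico] at hv hw
  obtain ⟨hv1, hv2⟩ := hv i
  obtain ⟨hw1, hw2⟩ := hw i
  rcases hi.lt_or_gt with h | h <;>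
    nlinarith [mul_le_mul_of_nonneg_left (Int.add_one_le_of_lt h) (Int.natCast_nonneg m)]

lemma mul_supNorm_sub_le {v w y b : Fin d → ℤ} {m : ℕ} (hvw : v ≠ w)
    (hy : y ∈ boxFinset d v m) (hb : b ∈ boxFinset d w m) :
    (m : ℤ) * supNorm (v - w) - m + 1 ≤ supNorm (y - b) := by
  obtain ⟨i, hi⟩ := exists_natAbs_eq_supNorm (supNorm_sub_pos_iff.2 hvw)
  simp only [boxFinset, Fintype.mem_piFinset, mem_Ico] at hy hb
  have hyb := natAbs_le_supNorm (y - b) i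
  simp only [Pi.sub_apply] at hi hyb
  have hmul : (m : ℤ) * v i - m * w i = m * supNorm (v - w) ∨
      (m : ℤ) * v i - m * w i = -(m * supNorm (v - w)) := by
    rcases Int.natAbs_eq (v i - w i) with h | h <;> rw [hi] at h
    · exact Or.inl (by rw [← h]; ring)
    · exact Or.inr (by rw [← neg_eq_iff_eq_neg.2 h]; ring)
  have := hy i
  have := hb i
  omega

def supBall (x : Fin d → ℤ) (k : ℕ) : Finset (Fin d → ℤ) :=
  Fintype.piFinset fun i => Icc (x i - k) (x i + k)

lemma mem_supBall {x a : Fin d → ℤ} {k : ℕ} : a ∈ supBall x k ↔ supNorm (x - a) ≤ k := by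
  simp only [supBall, Fintype.mem_piFinset, mem_Icc, supNorm_le_iff, Pi.sub_apply]
  exact forall_congr' fun i => by omega

lemma card_supBall (x : Fin d → ℤ) (k : ℕ) : #(supBall x k) = (2 * k + 1) ^ d := by
  have hside : ∀ i, (x i + k + 1 - (x i - k)).toNat = 2 * k + 1 := fun i => by omega
  simp [supBall, Fintype.card_piFinset, hside]

lemma card_filter_supNorm_sub_le_one_le (x : Fin d → ℤ) (B : Finset (Fin d → ℤ)) :
    #{a ∈ B | supNorm (x - a) ≤ 1} ≤ 3 ^ d := by
  calc #{a ∈ B | supNorm (x - a) ≤ 1} ≤ #(supBall x 1) :=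
        card_le_card fun a ha => mem_supBall.2 (mem_filter.1 ha).2
    _ = 3 ^ d := card_supBall x 1

lemma card_filter_supNorm_sub_eq_le (x : Fin d → ℤ) (B : Finset (Fin d → ℤ)) {k : ℕ}
    (hk : 1 ≤ k) : #{a ∈ B | supNorm (x - a) = k} ≤ 2 * d * (3 * k) ^ (d - 1) := by
  have hsub : supBall x (k - 1) ⊆ supBall x k := fun a ha =>
    mem_supBall.2 ((mem_supBall.1 ha).trans (Nat.sub_le k 1))
  have hshell : #{a ∈ B | supNorm (x - a) = k} ≤ (2 * k + 1) ^ d - (2 * k - 1) ^ d := by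
    calc #{a ∈ B | supNorm (x - a) = k} ≤ #(supBall x k \ supBall x (k - 1)) := by
          refine card_le_card fun a ha => ?_
          have := (mem_filter.1 ha).2
          simp only [mem_sdiff, mem_supBall]
          omega
      _ = (2 * k + 1) ^ d - (2 * k - 1) ^ d := by
          rw [card_sdiff_of_subset hsub, card_supBall, card_supBall]
          congr 2
          omega
  have hlow : (2 * k - 1) ^ d ≤ (2 * k + 1) ^ d := Nat.pow_le_pow_left (by omega) _
  have hdiff := abs_pow_sub_pow_le (α := ℤ) (2 * k + 1) (2 * k - 1) d
  rw [show (2 * k + 1 : ℤ) - (2 * k - 1) = 2 by ring, abs_two,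
    abs_of_pos (by positivity : (0 : ℤ) < 2 * k + 1),
    abs_of_nonneg (by omega : (0 : ℤ) ≤ 2 * k - 1),
    max_eq_left (by omega)] at hdiff
  have key : (((2 * k + 1) ^ d - (2 * k - 1) ^ d : ℕ) : ℤ) ≤ 2 * d * (3 * k) ^ (d - 1) := by
    push_cast [Nat.cast_sub hlow, Nat.cast_sub (show 1 ≤ 2 * k by omega)]
    calc ((2 : ℤ) * k + 1) ^ d - (2 * k - 1) ^ d ≤ 2 * d * (2 * k + 1) ^ (d - 1) :=
          (le_abs_self _).trans hdiff
      _ ≤ 2 * d * (3 * k) ^ (d - 1) := by gcongr; omega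
  exact hshell.trans (by exact_mod_cast key)

lemma sum_inv_supNorm_sub_pow_le (hd : 1 ≤ d) (x : Fin d → ℤ) (B : Finset (Fin d → ℤ)) {s : ℕ}
    (hs : 1 ≤ s) (hB : ∀ a ∈ B, s ≤ supNorm (x - a)) :
    ∑ a ∈ B, ((supNorm (x - a) : ℝ) ^ (2 * d))⁻¹ ≤ 4 * d * 3 ^ (d - 1) / (s : ℝ) ^ d := by
  set M := B.sup fun a => supNorm (x - a)
  have hmaps : ∀ a ∈ B, supNorm (x - a) ∈ Icc s M := fun a ha =>
    mem_Icc.2 ⟨hB a ha, le_sup (f := fun a => supNorm (x - a)) ha⟩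
  calc ∑ a ∈ B, ((supNorm (x - a) : ℝ) ^ (2 * d))⁻¹
      ≤ ∑ k ∈ Icc s M, (2 * d * (3 * k) ^ (d - 1) : ℝ) * ((k : ℝ) ^ (2 * d))⁻¹ := by
        refine sum_le_sum_mul_of_card_fiber_le (g := fun k : ℕ => ((k : ℝ) ^ (2 * d))⁻¹) hmaps
          (fun k hk => ?_) (fun k _ => by positivity)
        exact_mod_cast card_filter_supNorm_sub_eq_le x B (hs.trans (mem_Icc.1 hk).1)
    _ = 2 * d * 3 ^ (d - 1) * ∑ k ∈ Icc s M, ((k : ℝ) ^ (d + 1))⁻¹ := by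
        rw [mul_sum]
        refine sum_congr rfl fun k hk => ?_
        have hk : (k : ℝ) ≠ 0 := by have := hs.trans (mem_Icc.1 hk).1; positivity
        rw [mul_pow, show 2 * d = (d - 1) + (d + 1) by omega, pow_add]
        field_simp
    _ ≤ 2 * d * 3 ^ (d - 1) * (2 / (s : ℝ) ^ d) := by
        gcongr
        exact sum_Icc_inv_pow_succ_le hd hs M
    _ = 4 * d * 3 ^ (d - 1) / (s : ℝ) ^ d := by ring

/-- For `x ∈ V_v^m` and `u j = v j ± 1`: one plus the distance from `x` to the face of `V_v^m`
facing `V_u^m`. -/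
def faceDepth (m : ℕ) (v u : Fin d → ℤ) (j : Fin d) (x : Fin d → ℤ) : ℕ :=
  if v j < u j then ((m : ℤ) * v j + m - x j).toNat else (x j - m * v j + 1).toNat

variable {m : ℕ} {u v x : Fin d → ℤ} {j : Fin d}

lemma faceDepth_mem_Icc (hx : x ∈ boxFinset d v m) : faceDepth m v u j x ∈ Icc 1 m := by
  have := (Fintype.mem_piFinset.1 hx) j
  simp only [mem_Ico] at this
  simp only [faceDepth, mem_Icc]
  split_ifs <;> omega

lemma faceDepth_le_supNorm (hj : (u j - v j).natAbs = 1) (hx : x ∈ boxFinset d v m) {a : Fin d → ℤ}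
    (ha : a ∈ boxFinset d u m) : faceDepth m v u j x ≤ supNorm (x - a) := by
  have hxj := (Fintype.mem_piFinset.1 hx) j
  have haj := (Fintype.mem_piFinset.1 ha) j
  simp only [mem_Ico] at hxj haj
  have hxa := natAbs_le_supNorm (x - a) j
  simp only [Pi.sub_apply] at hxa
  simp only [faceDepth]
  rcases Int.natAbs_eq_iff.1 hj with h | h
  · have hmu : (m : ℤ) * u j = m * v j + m := by rw [show u j = v j + 1 by omega]; ring
    split_ifs <;> omega
  · have hmu : (m : ℤ) * u j = m * v j - m := by rw [show u j = v j - 1 by omega]; ring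
    split_ifs <;> omega

lemma card_filter_faceDepth_eq_le (t : ℕ) :
    #{x ∈ boxFinset d v m | faceDepth m v u j x = t} ≤ m ^ (d - 1) := by
  set c : ℤ := if v j < u j then m * v j + m - t else m * v j + t - 1
  calc #{x ∈ boxFinset d v m | faceDepth m v u j x = t}
      ≤ #{x ∈ boxFinset d v m | x j = c} := by
        refine card_le_card fun x hx => ?_
        obtain ⟨hx, hxt⟩ := mem_filter.1 hx
        have hxj := (Fintype.mem_piFinset.1 hx) j
        simp only [mem_Ico] at hxj
        refine mem_filter.2 ⟨hx, ?_⟩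
        simp only [faceDepth, c] at hxt ⊢
        split_ifs at hxt ⊢ <;> omega
    _ ≤ m ^ (d - 1) := by
        refine (Fintype.card_filter_piFinset_eq
          (fun i => Ico ((m : ℤ) * v i) (m * v i + m)) j c).le.trans ?_
        split_ifs
        · simp [prod_const, card_erase_of_mem]
        · exact Nat.zero_le _

lemma sum_inv_faceDepth_pow_le (hd : 1 ≤ d) (hm : 2 ≤ m) :
    ∑ x ∈ boxFinset d v m, ((faceDepth m v u j x : ℝ) ^ d)⁻¹
      ≤ m ^ (d - 1) * (3 * if d = 1 then Real.log m else 1) := by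
  calc ∑ x ∈ boxFinset d v m, ((faceDepth m v u j x : ℝ) ^ d)⁻¹
      ≤ ∑ t ∈ Icc 1 m, (m : ℝ) ^ (d - 1) * ((t : ℝ) ^ d)⁻¹ := by
        refine sum_le_sum_mul_of_card_fiber_le (g := fun t : ℕ => ((t : ℝ) ^ d)⁻¹)
          (fun x hx => faceDepth_mem_Icc hx)
          (fun t _ => ?_) (fun t _ => by positivity)
        exact_mod_cast card_filter_faceDepth_eq_le t
    _ ≤ m ^ (d - 1) * (3 * if d = 1 then Real.log m else 1) := by
        rw [← mul_sum]
        gcongr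
        exact sum_Icc_inv_pow_le hd hm

lemma sum_sum_inv_supNorm_sub_pow_le (hd : 1 ≤ d) (hm : 2 ≤ m) (huv : supNorm (u - v) = 1) :
    ∑ x ∈ boxFinset d v m, ∑ a ∈ boxFinset d u m, ((supNorm (x - a) : ℝ) ^ (2 * d))⁻¹
      ≤ 4 * d * 3 ^ (d - 1) * m ^ (d - 1) * (3 * if d = 1 then Real.log m else 1) := by
  obtain ⟨j, hj⟩ := exists_natAbs_eq_supNorm (huv ▸ Nat.one_pos)
  rw [huv] at hj
  calc ∑ x ∈ boxFinset d v m, ∑ a ∈ boxFinset d u m, ((supNorm (x - a) : ℝ) ^ (2 * d))⁻¹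
      ≤ ∑ x ∈ boxFinset d v m, 4 * d * 3 ^ (d - 1) / (faceDepth m v u j x : ℝ) ^ d :=
        sum_le_sum fun x hx => sum_inv_supNorm_sub_pow_le hd x _
          (mem_Icc.1 (faceDepth_mem_Icc hx)).1 fun a ha => faceDepth_le_supNorm hj hx ha
    _ = 4 * d * 3 ^ (d - 1) * ∑ x ∈ boxFinset d v m, ((faceDepth m v u j x : ℝ) ^ d)⁻¹ := by
        simp only [mul_sum, div_eq_mul_inv]
    _ ≤ 4 * d * 3 ^ (d - 1) * (m ^ (d - 1) * (3 * if d = 1 then Real.log m else 1)) := by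
        gcongr
        exact sum_inv_faceDepth_pow_le hd hm
    _ = _ := by ring

end Boxes

section Connection

variable {d : ℕ}

lemma measurableSet_unitCube (u : Fin d → ℤ) : MeasurableSet (unitCube u) :=
  MeasurableSet.univ_pi fun _ => measurableSet_Ico

lemma volume_unitCube (u : Fin d → ℤ) : volume (unitCube u) = 1 := by
  simp [unitCube, volume_pi_pi, Real.volume_Ico]

lemma supNorm_sub_one_le_sqrt {u v : Fin d → ℤ} {x y : Fin d → ℝ} (hx : x ∈ unitCube u)
    (hy : y ∈ unitCube v) : (supNorm (u - v) : ℝ) - 1 ≤ √(∑ i, (x i - y i) ^ 2) := by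
  rcases Nat.eq_zero_or_pos (supNorm (u - v)) with h0 | hpos
  · rw [h0, Nat.cast_zero]
    linarith [Real.sqrt_nonneg (∑ i, (x i - y i) ^ 2)]
  obtain ⟨i, hi⟩ := exists_natAbs_eq_supNorm hpos
  have hxi := hx i (Set.mem_univ i)
  have hyi := hy i (Set.mem_univ i)
  simp only [Set.mem_Ico] at hxi hyi
  have hcoord : (supNorm (u - v) : ℝ) - 1 ≤ |x i - y i| := by
    rw [← hi, Nat.cast_natAbs, Pi.sub_apply, Int.cast_abs, Int.cast_sub]
    have := abs_sub_abs_le_abs_sub ((u i : ℝ) - v i) (x i - y i)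
    have := abs_sub_lt_iff.2 (show ((u i : ℝ) - v i) - (x i - y i) < 1 ∧
      (x i - y i) - ((u i : ℝ) - v i) < 1 by constructor <;> linarith)
    linarith
  refine hcoord.trans (Real.abs_le_sqrt ?_)
  exact single_le_sum (f := fun i => (x i - y i) ^ 2) (fun i _ => sq_nonneg _) (mem_univ i)

lemma edgeIntegral_le {u v : Fin d → ℤ} {r : ℝ} (hr : 0 < r) (h : r + 1 ≤ supNorm (u - v)) :
    edgeIntegral d u v ≤ ENNReal.ofReal (r ^ (2 * d))⁻¹ := by
  have hbound : ∀ x ∈ unitCube u, ∀ y ∈ unitCube v,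
      ENNReal.ofReal (√(∑ i, (x i - y i) ^ 2) ^ (-(2 * (d : ℝ))))
        ≤ ENNReal.ofReal (r ^ (2 * d))⁻¹ := by
    intro x hx y hy
    refine ENNReal.ofReal_le_ofReal ?_
    have hr' : r ≤ √(∑ i, (x i - y i) ^ 2) := by linarith [supNorm_sub_one_le_sqrt hx hy]
    calc √(∑ i, (x i - y i) ^ 2) ^ (-(2 * (d : ℝ))) ≤ r ^ (-(2 * (d : ℝ))) :=
          Real.rpow_le_rpow_of_nonpos hr hr' (neg_nonpos.2 (by positivity))
      _ = (r ^ (2 * d))⁻¹ := by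
          rw [Real.rpow_neg hr.le, ← Nat.cast_ofNat, ← Nat.cast_mul, Real.rpow_natCast]
  calc edgeIntegral d u v
      ≤ ∫⁻ _ in unitCube u, ∫⁻ _ in unitCube v, ENNReal.ofReal (r ^ (2 * d))⁻¹ :=
        setLIntegral_mono' (measurableSet_unitCube u) fun x hx =>
          setLIntegral_mono' (measurableSet_unitCube v) (hbound x hx)
    _ = ENNReal.ofReal (r ^ (2 * d))⁻¹ := by simp [volume_unitCube]

variable {β : ℝ} {u v : Fin d → ℤ}

lemma pConn_nonneg (hβ : 0 ≤ β) (u v : Fin d → ℤ) : 0 ≤ pConn d β u v := by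
  unfold pConn
  split_ifs
  · exact zero_le_one
  · have : -β * (edgeIntegral d u v).toReal ≤ 0 := by
      have := (edgeIntegral d u v).toReal_nonneg
      nlinarith
    linarith [Real.exp_le_one_iff.2 this]

lemma pConn_le_one (β : ℝ) (u v : Fin d → ℤ) : pConn d β u v ≤ 1 := by
  unfold pConn
  split_ifs
  · exact le_rfl
  · linarith [Real.exp_nonneg (-β * (edgeIntegral d u v).toReal)]

lemma pConn_le_of_add_one_le_supNorm (hβ : 0 ≤ β) {r : ℝ} (hr : 0 < r)
    (h : r + 1 ≤ supNorm (u - v)) : pConn d β u v ≤ β / r ^ (2 * d) := by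
  have hle := edgeIntegral_le hr h
  have hint : (edgeIntegral d u v).toReal ≤ (r ^ (2 * d))⁻¹ :=
    ENNReal.toReal_le_of_le_ofReal (by positivity) hle
  rw [pConn, if_neg (ne_top_of_le_ne_top ENNReal.ofReal_ne_top hle), div_eq_mul_inv]
  nlinarith [Real.add_one_le_exp (-β * (edgeIntegral d u v).toReal)]

lemma pConn_le_of_ne (hβ : 0 ≤ β) (huv : u ≠ v) :
    pConn d β u v ≤ 4 ^ d * max 1 β / (supNorm (u - v) : ℝ) ^ (2 * d) := by
  set k := supNorm (u - v) with hk
  have hk1 : 1 ≤ k := supNorm_sub_pos_iff.2 huv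
  rcases hk1.eq_or_lt with h1 | h2
  · rw [← h1, Nat.cast_one, one_pow, div_one]
    calc pConn d β u v ≤ 1 := pConn_le_one β u v
      _ ≤ 4 ^ d * max 1 β :=
          one_le_mul_of_one_le_of_one_le (one_le_pow₀ (by norm_num)) (le_max_left _ _)
  · have hk2 : (2 : ℝ) ≤ k := by exact_mod_cast h2
    calc pConn d β u v ≤ β / ((k : ℝ) / 2) ^ (2 * d) :=
          pConn_le_of_add_one_le_supNorm hβ (by positivity) (by linarith)
      _ = 4 ^ d * β / (k : ℝ) ^ (2 * d) := by
          rw [div_pow, div_div_eq_mul_div, pow_mul 2, show (2 : ℝ) ^ 2 = 4 by norm_num, mul_comm]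
      _ ≤ 4 ^ d * max 1 β / (k : ℝ) ^ (2 * d) := by gcongr; exact le_max_right _ _

lemma IsPercolation.measure_open_pair {f : (Fin d → ℤ) → (Fin d → ℤ) → ℝ}
    {P : Measure (PercConfig d)} (hP : IsPercolation d f P) {x a y b : Fin d → ℤ} (hxa : x ≠ a)
    (hyb : y ≠ b) (he : s(x, a) ≠ s(y, b)) :
    P {ω | ω s(x, a) = true ∧ ω s(y, b) = true}
      = ENNReal.ofReal (f x a) * ENNReal.ofReal (f y b) := by
  rw [← hP.openProb x a hxa, ← hP.openProb y b hyb]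
  exact (hP.indep.indepFun he).measure_inter_preimage_eq_mul {true} {true}
    (measurableSet_singleton _) (measurableSet_singleton _)

lemma IsPercolation.measure_exists_open_pair_le {f : (Fin d → ℤ) → (Fin d → ℤ) → ℝ}
    {P : Measure (PercConfig d)} (hP : IsPercolation d f P) (hf : ∀ x y, 0 ≤ f x y)
    {X A B : Finset (Fin d → ℤ)} (hXA : Disjoint X A) (hXB : Disjoint X B) (hAB : Disjoint A B)
    (R : (Fin d → ℤ) → (Fin d → ℤ) → Prop) [DecidableRel R] :
    P {ω | ∃ x ∈ X, ∃ y ∈ X, R x y ∧ (∃ a ∈ A, ω s(x, a) = true) ∧ ∃ b ∈ B, ω s(y, b) = true}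
      ≤ ENNReal.ofReal (∑ x ∈ X, ∑ y ∈ X with R x y, (∑ a ∈ A, f x a) * ∑ b ∈ B, f y b) := by
  set Q := {p ∈ X ×ˢ X | R p.1 p.2} ×ˢ (A ×ˢ B)
  have hcover : {ω : PercConfig d | ∃ x ∈ X, ∃ y ∈ X, R x y ∧ (∃ a ∈ A, ω s(x, a) = true) ∧
      ∃ b ∈ B, ω s(y, b) = true} ⊆
      ⋃ q ∈ Q, {ω | ω s(q.1.1, q.2.1) = true ∧ ω s(q.1.2, q.2.2) = true} := by
    rintro ω ⟨x, hx, y, hy, hxy, ⟨a, ha, hxa⟩, b, hb, hyb⟩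
    exact Set.mem_biUnion (x := ((x, y), (a, b))) (by simp [Q, hx, hy, hxy, ha, hb]) ⟨hxa, hyb⟩
  have hpair : ∀ q ∈ Q, P {ω | ω s(q.1.1, q.2.1) = true ∧ ω s(q.1.2, q.2.2) = true}
      = ENNReal.ofReal (f q.1.1 q.2.1 * f q.1.2 q.2.2) := by
    rintro ⟨⟨x, y⟩, a, b⟩ hq
    simp only [Q, mem_product, mem_filter] at hq
    obtain ⟨⟨⟨hx, hy⟩, -⟩, ha, hb⟩ := hq
    have he : s(x, a) ≠ s(y, b) := by
      rw [Ne, Sym2.eq_iff]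
      rintro (⟨-, rfl⟩ | ⟨rfl, -⟩)
      · exact disjoint_left.1 hAB ha hb
      · exact disjoint_left.1 hXB hx hb
    have hxa : x ≠ a := fun h => disjoint_left.1 hXA hx (h ▸ ha)
    have hyb : y ≠ b := fun h => disjoint_left.1 hXB hy (h ▸ hb)
    rw [hP.measure_open_pair hxa hyb he, ENNReal.ofReal_mul (hf x a)]
  calc _ ≤ P (⋃ q ∈ Q, {ω | ω s(q.1.1, q.2.1) = true ∧ ω s(q.1.2, q.2.2) = true}) :=
        measure_mono hcover
    _ ≤ ∑ q ∈ Q, P {ω | ω s(q.1.1, q.2.1) = true ∧ ω s(q.1.2, q.2.2) = true} :=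
        measure_biUnion_finset_le _ _
    _ = ENNReal.ofReal (∑ q ∈ Q, f q.1.1 q.2.1 * f q.1.2 q.2.2) := by
        rw [sum_congr rfl hpair,
          ENNReal.ofReal_sum_of_nonneg fun q _ => mul_nonneg (hf _ _) (hf _ _)]
    _ = _ := by
        rw [sum_product, sum_filter, sum_product]
        simp_rw [sum_filter, sum_product, sum_mul_sum]

variable {m : ℕ} {w : Fin d → ℤ}

lemma sum_pConn_le_of_two_le_supNorm (hβ : 0 ≤ β) (hm : 1 ≤ m) (hvw : 2 ≤ supNorm (v - w))
    {y : Fin d → ℤ} (hy : y ∈ boxFinset d v m) :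
    ∑ b ∈ boxFinset d w m, pConn d β y b
      ≤ 4 ^ d * β / ((supNorm (v - w) : ℝ) ^ (2 * d) * m ^ d) := by
  set K := supNorm (v - w)
  have hv_ne_w : v ≠ w := supNorm_sub_pos_iff.1 (by omega)
  have hK : (2 : ℝ) ≤ K := by exact_mod_cast hvw
  have hm' : (1 : ℝ) ≤ m := by exact_mod_cast hm
  have hterm : ∀ b ∈ boxFinset d w m, pConn d β y b ≤ β / ((m : ℝ) * K / 2) ^ (2 * d) := by
    intro b hb
    refine pConn_le_of_add_one_le_supNorm hβ (by positivity) ?_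
    have := mul_supNorm_sub_le hv_ne_w hy hb
    have : (m : ℝ) * K - m + 1 ≤ supNorm (y - b) := by exact_mod_cast this
    nlinarith
  calc ∑ b ∈ boxFinset d w m, pConn d β y b
      ≤ #(boxFinset d w m) • (β / ((m : ℝ) * K / 2) ^ (2 * d)) := sum_le_card_nsmul _ _ _ hterm
    _ = 4 ^ d * β / ((K : ℝ) ^ (2 * d) * m ^ d) := by
        rw [card_boxFinset, nsmul_eq_mul, Nat.cast_pow, div_pow, mul_pow, pow_mul 2]
        field_simp
        ring

lemma sum_sum_pConn_le_of_supNorm_eq_one (hd : 1 ≤ d) (hβ : 0 ≤ β) (hm : 2 ≤ m)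
    (huv : supNorm (u - v) = 1) :
    ∑ x ∈ boxFinset d v m, ∑ a ∈ boxFinset d u m, pConn d β x a
      ≤ 4 ^ d * max 1 β *
        (4 * d * 3 ^ (d - 1) * m ^ (d - 1) * (3 * if d = 1 then Real.log m else 1)) := by
  have hv_ne_u : v ≠ u := (supNorm_sub_pos_iff.1 (by omega)).symm
  calc ∑ x ∈ boxFinset d v m, ∑ a ∈ boxFinset d u m, pConn d β x a
      ≤ ∑ x ∈ boxFinset d v m, ∑ a ∈ boxFinset d u m,
          4 ^ d * max 1 β * ((supNorm (x - a) : ℝ) ^ (2 * d))⁻¹ := by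
        gcongr with x hx a ha
        rw [← div_eq_mul_inv]
        exact pConn_le_of_ne hβ fun h => disjoint_left.1 (disjoint_boxFinset hv_ne_u m) hx (h ▸ ha)
    _ ≤ _ := by
        simp only [← mul_sum]
        gcongr
        exact sum_sum_inv_supNorm_sub_pow_le hd hm huv

lemma mul_max_one_le_mul_ceil (hβ : 0 ≤ β) : β * max 1 β ≤ β * ⌈β⌉ := by
  rcases hβ.eq_or_lt with rfl | hpos
  · simp
  · gcongr
    exact max_le (by exact_mod_cast Int.one_le_ceil_iff.2 hpos) (Int.le_ceil β)

lemma sum_close_pairs_pConn_mul_le (hd : 1 ≤ d) (hβ : 0 ≤ β) (hm : 2 ≤ m)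
    (huv : supNorm (u - v) = 1) (hvw : 2 ≤ supNorm (v - w)) :
    ∑ x ∈ boxFinset d v m, ∑ y ∈ boxFinset d v m with supNorm (x - y) ≤ 1,
        (∑ a ∈ boxFinset d u m, pConn d β x a) * ∑ b ∈ boxFinset d w m, pConn d β y b
      ≤ 48 ^ d * (12 * d * 3 ^ (d - 1)) * (β * max 1 β) * (if d = 1 then Real.log m else 1)
        / ((supNorm (v - w) : ℝ) ^ (2 * d) * m) := by
  set F := 4 ^ d * β / ((supNorm (v - w) : ℝ) ^ (2 * d) * m ^ d)
  have hF : 0 ≤ F := by positivity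
  have hA : ∀ x, 0 ≤ ∑ a ∈ boxFinset d u m, pConn d β x a := fun x =>
    sum_nonneg fun a _ => pConn_nonneg hβ x a
  calc _ ≤ ∑ x ∈ boxFinset d v m, ∑ y ∈ boxFinset d v m with supNorm (x - y) ≤ 1,
          (∑ a ∈ boxFinset d u m, pConn d β x a) * F := by
        gcongr with x _ y hy
        · exact hA x
        · exact sum_pConn_le_of_two_le_supNorm hβ (by omega) hvw (mem_filter.1 hy).1
    _ ≤ ∑ x ∈ boxFinset d v m, 3 ^ d * ((∑ a ∈ boxFinset d u m, pConn d β x a) * F) := by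
        gcongr with x
        rw [sum_const, nsmul_eq_mul]
        gcongr
        · exact mul_nonneg (hA x) hF
        · exact_mod_cast card_filter_supNorm_sub_le_one_le x _
    _ = 3 ^ d * F * ∑ x ∈ boxFinset d v m, ∑ a ∈ boxFinset d u m, pConn d β x a := by
        rw [mul_sum]
        exact sum_congr rfl fun x _ => by ring
    _ ≤ 3 ^ d * F * (4 ^ d * max 1 β *
          (4 * d * 3 ^ (d - 1) * m ^ (d - 1) * (3 * if d = 1 then Real.log m else 1))) := by
        gcongr
        exact sum_sum_pConn_le_of_supNorm_eq_one hd hβ hm huv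
    _ = _ := by
        obtain ⟨e, rfl⟩ : ∃ e, d = e + 1 := ⟨d - 1, by omega⟩
        have : (0 : ℝ) < m := by positivity
        simp only [F, Nat.add_sub_cancel, show (48 : ℝ) = 3 * 4 * 4 by norm_num, mul_pow, pow_succ]
        field_simp
        ring

end Connection

/-- There is a constant `C_d < ∞`, depending only on `d`, such that for all
`β ≥ 0`, `m ≥ 2`, and boxes with `‖u−v‖_∞ = 1`, `‖v−w‖_∞ ≥ 2`, the probability that some
`x, y ∈ V_v^m` with `‖x−y‖_∞ ≤ 1` satisfy `x ∼ V_u^m` and `y ∼ V_w^m` is at most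
`C_d β ⌈β⌉ log(m)/(‖v−w‖_∞^{2d} m)` if `d = 1`, and `C_d β ⌈β⌉/(‖v−w‖_∞^{2d} m)` if `d ≥ 2`. -/
theorem statement8 (d : ℕ) (hd : 1 ≤ d) :
    ∃ C : ℝ, 0 < C ∧
      ∀ β : ℝ, 0 ≤ β → ∀ m : ℕ, 2 ≤ m → ∀ u v w : Fin d → ℤ,
        supNorm (u - v) = 1 → 2 ≤ supNorm (v - w) →
        ∀ P : Measure (PercConfig d), IsLRP d β P →
          P {ω | ∃ x ∈ latticeBox d v m, ∃ y ∈ latticeBox d v m,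
                supNorm (x - y) ≤ 1 ∧
                (∃ a ∈ latticeBox d u m, x ≠ a ∧ ω s(x, a) = true) ∧
                (∃ b ∈ latticeBox d w m, y ≠ b ∧ ω s(y, b) = true)}
            ≤ ENNReal.ofReal (if d = 1 then
                C * β * (⌈β⌉ : ℝ) * Real.log m / ((supNorm (v - w) : ℝ) ^ (2 * d) * (m : ℝ))
              else
                C * β * (⌈β⌉ : ℝ) / ((supNorm (v - w) : ℝ) ^ (2 * d) * (m : ℝ))) := by
  refine ⟨48 ^ d * (12 * d * 3 ^ (d - 1)), by positivity, ?_⟩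
  intro β hβ m hm u v w huv hvw P hP
  have hv_ne_u : v ≠ u := (supNorm_sub_pos_iff.1 (by omega)).symm
  have hv_ne_w : v ≠ w := supNorm_sub_pos_iff.1 (by omega)
  have hu_ne_w : u ≠ w := by
    rintro rfl
    rw [supNorm_sub_comm] at hvw
    omega
  have hevent := hP.measure_exists_open_pair_le (pConn_nonneg hβ)
    (disjoint_boxFinset hv_ne_u m) (disjoint_boxFinset hv_ne_w m) (disjoint_boxFinset hu_ne_w m)
    fun x y => supNorm (x - y) ≤ 1
  refine (measure_mono ?_).trans (hevent.trans (ENNReal.ofReal_le_ofReal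
    ((sum_close_pairs_pConn_mul_le hd hβ hm huv hvw).trans ?_)))
  · rintro ω ⟨x, hx, y, hy, hxy, ⟨a, ha, -, hxa⟩, b, hb, -, hyb⟩
    exact ⟨x, mem_boxFinset.2 hx, y, mem_boxFinset.2 hy, hxy, ⟨a, mem_boxFinset.2 ha, hxa⟩,
      b, mem_boxFinset.2 hb, hyb⟩
  · have hceil := mul_max_one_le_mul_ceil hβ
    have hlog : 0 ≤ Real.log m := Real.log_nonneg (by exact_mod_cast (by omega : 1 ≤ m))
    split_ifs
    · rw [mul_assoc _ β]
      gcongr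
    · rw [mul_one, mul_assoc _ β]
      gcongr
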